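/- arXiv:2303.03570 — 2 statements merged into one kernel-verified Lean document; each statement's English description precedes it below -/
import Mathlib

section
/- Let 𝒲, 𝒱, 𝒵 be Banach spaces, 𝒪 ⊆ 𝒲 × 𝒱 open containing (w₀, v₀), and G : 𝒪 → 𝒵 a C¹ (or analytic) map with G(w₀,v₀) = 0, ker D_w G(w₀,v₀) = {0}, and codim rng D_w G(w₀,v₀) = n ≥ 1. Suppose φ : 𝒵 × 𝒲 × 𝒱 → ℝⁿ is C¹ with φ(G(w,v), w, v) = 0 and φ(0, w, v) = 0 for all (w,v) in a neighborhood of (w₀,v₀), and D_Z φ(0, w₀, v₀) is surjective. Then there exist neighborhoods 𝒱₀ ∋ v₀, 𝒲₀ ∋ w₀ and a C¹ map w̃ : 𝒱₀ → 𝒲 with G(w̃(v), v) = 0 for all v ∈ 𝒱₀; moreover any (w,v) ∈ 𝒲₀ × 𝒱₀ with G(w,v) = 0 satisfies w = w̃(v). -/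
/-!
Let `A = D_Z φ(0, w₀, v₀)`. Differentiating the two identities gives `A ∘ D G = 0`, so
`rng D_w G ⊆ ker A`; both have codimension `n`, hence they coincide, and a right inverse `B` of `A`
spans a complement of `rng D_w G`. The augmented map `(w, c, v) ↦ G (w, v) + B c` therefore has
an invertible partial derivative in `(w, c)`, and the ordinary implicit function theorem solves it
by `v ↦ (w̃ v, c v)`. Finally `c ↦ φ (B c, p)` has derivative `A ∘ B = id` at `(0, p₀)`, so it is
injective near `0` uniformly in `p`; since it vanishes both at `-c v` (as `G (w̃ v, v) = -B (c v)`)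
and at `0`, the correction `c v` is zero.
-/

open Module Function Filter Topology ContinuousLinearMap

theorem Submodule.eq_of_le_of_finrank_quotient_eq {K M : Type*} [DivisionRing K]
    [AddCommGroup M] [Module K M] {p q : Submodule K M} [FiniteDimensional K (M ⧸ p)]
    (hpq : p ≤ q) (h : finrank K (M ⧸ p) = finrank K (M ⧸ q)) : p = q := by
  have : FiniteDimensional K (M ⧸ q) := Module.Finite.of_surjective _ (factor_surjective hpq)
  have hinj : Injective (factor hpq) :=
    (LinearMap.injective_iff_surjective_of_finrank_eq_finrank h).2 (factor_surjective hpq)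
  refine le_antisymm hpq fun z hz => ?_
  rw [← Quotient.mk_eq_zero]
  exact hinj (by simpa [Quotient.mk_eq_zero] using hz)

theorem LinearMap.bijective_coprod_of_range_eq_ker {R W Y Z : Type*} [Ring R]
    [AddCommGroup W] [AddCommGroup Y] [AddCommGroup Z] [Module R W] [Module R Y] [Module R Z]
    {D : W →ₗ[R] Z} {A : Z →ₗ[R] Y} {B : Y →ₗ[R] Z} (hD : Injective D) (hAB : A ∘ₗ B = id)
    (hDA : range D = ker A) : Bijective (D.coprod B) := by
  have hAD (w : W) : A (D w) = 0 := by
    rw [← mem_ker, ← hDA]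
    exact mem_range_self D w
  have hABy (y : Y) : A (B y) = y := congr($hAB y)
  refine ⟨(injective_iff_map_eq_zero _).2 fun ⟨w, y⟩ h => ?_, fun z => ?_⟩
  · obtain rfl : y = 0 := by simpa [hAD, hABy] using congr(A $h)
    simp only [coprod_apply, map_zero, add_zero] at h
    simp [hD (h.trans D.map_zero.symm)]
  · obtain ⟨w, hw⟩ : z - B (A z) ∈ range D := by
      rw [hDA, mem_ker, map_sub, hABy, sub_self]
    exact ⟨(w, A z), by simp [hw]⟩

theorem ContinuousLinearMap.exists_rightInverse_bijective_coprod {𝕜 W Y Z : Type*}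
    [NontriviallyNormedField 𝕜] [CompleteSpace 𝕜] [NormedAddCommGroup W] [NormedSpace 𝕜 W]
    [NormedAddCommGroup Y] [NormedSpace 𝕜 Y] [NormedAddCommGroup Z] [NormedSpace 𝕜 Z]
    {D : W →L[𝕜] Z} {A : Z →L[𝕜] Y} (hD : Injective D) (hA : Surjective A)
    (hAD : A ∘L D = 0) (hcodim : finrank 𝕜 (Z ⧸ LinearMap.range (D : W →ₗ[𝕜] Z)) = finrank 𝕜 Y)
    (hY : 0 < finrank 𝕜 Y) : ∃ B : Y →L[𝕜] Z, A ∘L B = .id 𝕜 Y ∧ Bijective (D.coprod B) := by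
  have : FiniteDimensional 𝕜 Y := Module.finite_of_finrank_pos hY
  have : FiniteDimensional 𝕜 (Z ⧸ LinearMap.range (D : W →ₗ[𝕜] Z)) :=
    Module.finite_of_finrank_pos (hcodim ▸ hY)
  have hDA : LinearMap.range (D : W →ₗ[𝕜] Z) = LinearMap.ker (A : Z →ₗ[𝕜] Y) := by
    refine Submodule.eq_of_le_of_finrank_quotient_eq ?_ ?_
    · rintro _ ⟨w, rfl⟩
      exact congr($hAD w)
    · rw [hcodim, ((A : Z →ₗ[𝕜] Y).quotKerEquivOfSurjective hA).finrank_eq]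
  obtain ⟨B, hAB⟩ := A.exists_rightInverse_of_surjective (LinearMap.range_eq_top.2 hA)
  exact ⟨B, hAB, LinearMap.bijective_coprod_of_range_eq_ker hD congr(($hAB : Y →ₗ[𝕜] Y)) hDA⟩

theorem HasFDerivAt.eq_zero_of_eventuallyEq_zero {𝕜 E F : Type*} [NontriviallyNormedField 𝕜]
    [NormedAddCommGroup E] [NormedSpace 𝕜 E] [NormedAddCommGroup F] [NormedSpace 𝕜 F]
    {f : E → F} {f' : E →L[𝕜] F} {x : E} (hf : HasFDerivAt f f' x) (h₀ : f =ᶠ[𝓝 x] 0) :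
    f' = 0 :=
  hf.unique ((hasFDerivAt_const 0 x).congr_of_eventuallyEq h₀)

theorem comp_inl_comp_eq_zero_of_identities {𝕜 P Y Z : Type*} [NontriviallyNormedField 𝕜]
    [NormedAddCommGroup P] [NormedSpace 𝕜 P] [NormedAddCommGroup Y] [NormedSpace 𝕜 Y]
    [NormedAddCommGroup Z] [NormedSpace 𝕜 Z] {φ : Z × P → Y} {L : Z × P →L[𝕜] Y} {G : P → Z}
    {G' : P →L[𝕜] Z} {p₀ : P} (hφ : HasFDerivAt φ L (0, p₀)) (hG : HasFDerivAt G G' p₀)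
    (hG₀ : G p₀ = 0) (hid₁ : ∀ᶠ p in 𝓝 p₀, φ (G p, p) = 0)
    (hid₂ : ∀ᶠ p in 𝓝 p₀, φ (0, p) = 0) : (L ∘L inl 𝕜 Z P) ∘L G' = 0 := by
  have hφ' : HasFDerivAt φ L (G p₀, p₀) := hG₀ ▸ hφ
  have h₁ : L ∘L (G'.prod (.id 𝕜 P)) = 0 :=
    (HasFDerivAt.comp (f := fun p => (G p, p)) p₀ hφ'
      (hG.prodMk (hasFDerivAt_id p₀))).eq_zero_of_eventuallyEq_zero hid₁
  have h₂ : L ∘L inr 𝕜 Z P = 0 :=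
    (hφ.comp p₀ (hasFDerivAt_prodMk_right 0 p₀)).eq_zero_of_eventuallyEq_zero hid₂
  ext1 x
  calc L (G' x, 0) = L (G' x, x) - L (0, x) := by
        rw [← map_sub, Prod.mk_sub_mk, sub_zero, sub_self]
    _ = 0 := by simpa using congr($h₁ x - $h₂ x)

theorem eventually_eq_zero_of_apply_eq_zero {𝕜 P Y Z : Type*} [RCLike 𝕜]
    [NormedAddCommGroup P] [NormedSpace 𝕜 P] [CompleteSpace P] [NormedAddCommGroup Y]
    [NormedSpace 𝕜 Y] [CompleteSpace Y] [NormedAddCommGroup Z] [NormedSpace 𝕜 Z]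
    {φ : Z × P → Y} {L : Z × P →L[𝕜] Y} {p₀ : P} (hφ : HasStrictFDerivAt φ L (0, p₀))
    {B : Y →L[𝕜] Z} (hB : (L ∘L inl 𝕜 Z P) ∘L B = .id 𝕜 Y)
    (hφ₀ : ∀ᶠ p in 𝓝 p₀, φ (0, p) = 0) :
    ∀ᶠ q in 𝓝 (p₀, (0 : Y)), φ (B q.2, q.1) = 0 → q.2 = 0 := by
  set f : P × Y → Y := fun q => φ (B q.2, q.1)
  set f' : P × Y →L[𝕜] Y := L ∘L ((B ∘L snd 𝕜 P Y).prod (fst 𝕜 P Y))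
  have hf : HasStrictFDerivAt f f' (p₀, 0) := by
    refine HasStrictFDerivAt.comp (f := fun q : P × Y => (B q.2, q.1)) _ ?_
      ((B ∘L snd 𝕜 P Y).prod (fst 𝕜 P Y)).hasStrictFDerivAt
    simpa using hφ
  have hinv : (f' ∘L inr 𝕜 P Y).IsInvertible := by
    convert isInvertible_equiv (f := ContinuousLinearEquiv.refl 𝕜 Y)
    ext1 y
    simpa [f'] using congr($hB y)
  have hf₀ : f (p₀, 0) = 0 := by simpa [f] using hφ₀.self_of_nhds
  have hiff := hf.eventually_apply_eq_iff_implicitFunctionOfProdDomain hinv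
  rw [hf₀] at hiff
  have hiff₀ : ∀ᶠ q in 𝓝 (p₀, (0 : Y)),
      f (q.1, 0) = 0 ↔ hf.implicitFunctionOfProdDomain hinv q.1 = 0 :=
    ((continuous_fst.prodMk continuous_const).tendsto' (p₀, (0 : Y)) _ rfl).eventually hiff
  filter_upwards [hiff, hiff₀, continuous_fst.continuousAt.eventually hφ₀] with q h h₀ hz hq
  rw [← h.1 hq]
  exact h₀.1 (by simpa [f] using hz)

section ImplicitFunction

variable {𝕜 : Type*} [RCLike 𝕜]
  {W V Y Z : Type*} [NormedAddCommGroup W] [NormedSpace 𝕜 W] [CompleteSpace W]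
  [NormedAddCommGroup V] [NormedSpace 𝕜 V] [CompleteSpace V]
  [NormedAddCommGroup Y] [NormedSpace 𝕜 Y] [CompleteSpace Y]
  [NormedAddCommGroup Z] [NormedSpace 𝕜 Z] [CompleteSpace Z]

theorem exists_implicitFunction_of_bijective_coprod {G : W × V → Z} {w₀ : W} {v₀ : V}
    (hG : ContDiffAt 𝕜 1 G (w₀, v₀)) (hG₀ : G (w₀, v₀) = 0) {B : Y →L[𝕜] Z}
    (hB : Bijective ((fderiv 𝕜 (fun w => G (w, v₀)) w₀).coprod B)) :
    ∃ ψ : V → W × Y, ContDiffAt 𝕜 1 ψ v₀ ∧ ψ v₀ = (w₀, 0) ∧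
      (∀ᶠ v in 𝓝 v₀, G ((ψ v).1, v) + B (ψ v).2 = 0) ∧
      ∀ᶠ p in 𝓝 (w₀, v₀), G p = 0 → ψ p.2 = (p.1, 0) := by
  set f : V × (W × Y) → Z := fun x => G (x.2.1, x.1) + B x.2.2
  have hGd := hG.differentiableAt one_ne_zero
  have hf : ContDiffAt 𝕜 1 f (v₀, w₀, 0) := by
    refine (hG.comp (v₀, w₀, 0) ?_).add ?_ <;> fun_prop
  have hf' : fderiv 𝕜 f (v₀, w₀, 0) ∘L inr 𝕜 V (W × Y) =
      (fderiv 𝕜 (fun w => G (w, v₀)) w₀).coprod B := by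
    have hfd : HasFDerivAt f (fderiv 𝕜 G (w₀, v₀) ∘L ((fst 𝕜 W Y ∘L snd 𝕜 V (W × Y)).prod
        (fst 𝕜 V (W × Y))) + B ∘L snd 𝕜 W Y ∘L snd 𝕜 V (W × Y)) (v₀, w₀, 0) :=
      (HasFDerivAt.comp (f := fun x : V × (W × Y) => (x.2.1, x.1)) _ hGd.hasFDerivAt
        ((fst 𝕜 W Y ∘L snd 𝕜 V (W × Y)).prod (fst 𝕜 V (W × Y))).hasFDerivAt).add
        (B ∘L snd 𝕜 W Y ∘L snd 𝕜 V (W × Y)).hasFDerivAt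
    have hDw : HasFDerivAt (fun w => G (w, v₀)) (fderiv 𝕜 G (w₀, v₀) ∘L inl 𝕜 W V) w₀ :=
      hGd.hasFDerivAt.comp w₀ (hasFDerivAt_prodMk_left w₀ v₀)
    rw [hfd.fderiv, hDw.fderiv]
    ext <;> simp [Prod.mk_zero_zero]
  have hinv : (fderiv 𝕜 f (v₀, w₀, 0) ∘L inr 𝕜 V (W × Y)).IsInvertible := by
    rw [hf']
    exact ⟨.ofBijective _ (LinearMap.ker_eq_bot.2 hB.1) (LinearMap.range_eq_top.2 hB.2),
      ContinuousLinearEquiv.coe_ofBijective ..⟩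
  have hf₀ : f (v₀, w₀, 0) = 0 := by simp [f, hG₀]
  refine ⟨hf.implicitFunction one_ne_zero hinv, hf.contDiffAt_implicitFunction one_ne_zero hinv,
    hf.implicitFunction_apply_self one_ne_zero hinv, ?_, ?_⟩
  · simpa [f, hf₀] using hf.eventually_apply_implicitFunction one_ne_zero hinv
  · have hiff := hf.eventually_apply_eq_iff_implicitFunction one_ne_zero hinv
    rw [hf₀] at hiff
    have ht : Tendsto (fun p : W × V => (p.2, p.1, (0 : Y))) (𝓝 (w₀, v₀)) (𝓝 (v₀, w₀, 0)) :=
      (continuous_snd.prodMk (continuous_fst.prodMk continuous_const)).tendsto' _ _ rfl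
    filter_upwards [ht.eventually hiff] with p hp hGp
    exact hp.1 (by simp [f, hGp])

theorem exists_implicitFunction_of_identities {G : W × V → Z} {φ : Z × W × V → Y}
    {w₀ : W} {v₀ : V} (hG : ContDiffAt 𝕜 1 G (w₀, v₀)) (hG₀ : G (w₀, v₀) = 0)
    (hker : Injective (fderiv 𝕜 (fun w => G (w, v₀)) w₀))
    (hcodim : finrank 𝕜
      (Z ⧸ LinearMap.range ((fderiv 𝕜 (fun w => G (w, v₀)) w₀) : W →ₗ[𝕜] Z)) = finrank 𝕜 Y)
    (hY : 0 < finrank 𝕜 Y) (hφ : ContDiffAt 𝕜 1 φ (0, w₀, v₀))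
    (hsurj : Surjective (fderiv 𝕜 (fun z => φ (z, w₀, v₀)) 0))
    (hid₁ : ∀ᶠ p in 𝓝 (w₀, v₀), φ (G p, p) = 0) (hid₂ : ∀ᶠ p in 𝓝 (w₀, v₀), φ (0, p) = 0) :
    ∃ wt : V → W, ContDiffAt 𝕜 1 wt v₀ ∧ wt v₀ = w₀ ∧ (∀ᶠ v in 𝓝 v₀, G (wt v, v) = 0) ∧
      ∀ᶠ p in 𝓝 (w₀, v₀), G p = 0 → p.1 = wt p.2 := by
  have hGd := (hG.differentiableAt one_ne_zero).hasFDerivAt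
  have hφs := hφ.hasStrictFDerivAt one_ne_zero
  have hA : fderiv 𝕜 (fun z => φ (z, w₀, v₀)) 0 = fderiv 𝕜 φ (0, w₀, v₀) ∘L inl 𝕜 Z (W × V) :=
    (hφs.hasFDerivAt.comp 0 (hasFDerivAt_prodMk_left 0 (w₀, v₀))).fderiv
  have hDw : fderiv 𝕜 (fun w => G (w, v₀)) w₀ = fderiv 𝕜 G (w₀, v₀) ∘L inl 𝕜 W V :=
    (hGd.comp w₀ (hasFDerivAt_prodMk_left w₀ v₀)).fderiv
  have hAD : fderiv 𝕜 (fun z => φ (z, w₀, v₀)) 0 ∘L fderiv 𝕜 (fun w => G (w, v₀)) w₀ = 0 := by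
    rw [hA, hDw, ← ContinuousLinearMap.comp_assoc,
      comp_inl_comp_eq_zero_of_identities hφs.hasFDerivAt hGd hG₀ hid₁ hid₂, zero_comp]
  obtain ⟨B, hAB, hB⟩ := exists_rightInverse_bijective_coprod hker hsurj hAD hcodim hY
  obtain ⟨ψ, hψ, hψ₀, hψG, hψuniq⟩ := exists_implicitFunction_of_bijective_coprod hG hG₀ hB
  have hc : ∀ᶠ v in 𝓝 v₀, (ψ v).2 = 0 := by
    have hp : Tendsto (fun v => ((ψ v).1, v)) (𝓝 v₀) (𝓝 (w₀, v₀)) := by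
      simpa [hψ₀] using (hψ.continuousAt.fst.prodMk continuousAt_id).tendsto
    have hq : Tendsto (fun v => (((ψ v).1, v), -(ψ v).2)) (𝓝 v₀) (𝓝 ((w₀, v₀), (0 : Y))) := by
      simpa [hψ₀] using hp.prodMk_nhds hψ.continuousAt.snd.neg.tendsto
    filter_upwards [hq.eventually (eventually_eq_zero_of_apply_eq_zero hφs (hA ▸ hAB) hid₂),
      hp.eventually hid₁, hψG] with v hrigid hid hsol
    have hGB : G ((ψ v).1, v) = B (-(ψ v).2) := by
      rw [map_neg, eq_neg_iff_add_eq_zero, hsol]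
    simpa using hrigid (by rwa [← hGB])
  refine ⟨fun v => (ψ v).1, hψ.fst, congrArg Prod.fst hψ₀, ?_, ?_⟩
  · filter_upwards [hψG, hc] with v hsol hc
    simpa [hc] using hsol
  · filter_upwards [hψuniq] with p hp hGp
    rw [hp hGp]

end ImplicitFunction

/-- Implicit function theorem with identities: if the linearization `D_w G(w₀,v₀)` is
injective with range of codimension `n ≥ 1`, and this deficiency is explained by `n`
identities `φ(G(w,v),w,v) = 0`, `φ(0,w,v) = 0` with `D_Z φ(0,w₀,v₀)` surjective, then
the zero set of `G` near `(w₀,v₀)` is the graph of a `C¹` map `v ↦ w̃(v)`. -/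
theorem implicit_function_theorem_with_identities
    {W V Z : Type*}
    [NormedAddCommGroup W] [NormedSpace ℝ W] [CompleteSpace W]
    [NormedAddCommGroup V] [NormedSpace ℝ V] [CompleteSpace V]
    [NormedAddCommGroup Z] [NormedSpace ℝ Z] [CompleteSpace Z]
    (O : Set (W × V)) (hO : IsOpen O) (w0 : W) (v0 : V) (h0 : (w0, v0) ∈ O)
    (G : W × V → Z) (hG : ContDiffOn ℝ 1 G O)
    (hG0 : G (w0, v0) = 0)
    (hker : Function.Injective (fderiv ℝ (fun w => G (w, v0)) w0))
    (n : ℕ) (hn : 1 ≤ n)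
    (hcodim : Module.finrank ℝ
      (Z ⧸ LinearMap.range ((fderiv ℝ (fun w => G (w, v0)) w0) : W →ₗ[ℝ] Z)) = n)
    (φ : Z × W × V → (Fin n → ℝ)) (hφ : ContDiff ℝ 1 φ)
    (N : Set (W × V)) (hN : N ∈ nhds (w0, v0))
    (hid1 : ∀ p ∈ N, φ (G p, p.1, p.2) = 0)
    (hid2 : ∀ p ∈ N, φ (0, p.1, p.2) = 0)
    (hsurj : Function.Surjective (fderiv ℝ (fun z => φ (z, w0, v0)) 0)) :
    ∃ V0 ∈ nhds v0, ∃ W0 ∈ nhds w0, ∃ wt : V → W,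
      ContDiffOn ℝ 1 wt V0 ∧
      (∀ v ∈ V0, (wt v, v) ∈ O ∧ G (wt v, v) = 0) ∧
      (∀ w ∈ W0, ∀ v ∈ V0, (w, v) ∈ O → G (w, v) = 0 → w = wt v) := by
  obtain ⟨wt, hwt, hwt₀, hsol, huniq⟩ := exists_implicitFunction_of_identities
    (hG.contDiffAt (hO.mem_nhds h0)) hG0 hker (hcodim.trans (finrank_fin_fun ℝ).symm)
    (by rwa [finrank_fin_fun]) hφ.contDiffAt hsurj (mem_of_superset hN hid1)
    (mem_of_superset hN hid2)
  have hO₀ : ∀ᶠ v in 𝓝 v0, (wt v, v) ∈ O :=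
    (hwt.continuousAt.prodMk continuousAt_id).eventually_mem (by simpa [hwt₀] using hO.mem_nhds h0)
  obtain ⟨W0, hW0, V1, hV1, huniq⟩ := mem_nhds_prod_iff.1 huniq
  have hV0 : ∀ᶠ v in 𝓝 v0, ContDiffAt ℝ 1 wt v ∧ (wt v, v) ∈ O ∧ G (wt v, v) = 0 ∧ v ∈ V1 :=
    (hwt.eventually (by simp)).and (hO₀.and (hsol.and hV1))
  exact ⟨_, hV0, W0, hW0, wt, fun v hv => hv.1.contDiffWithinAt, fun v hv => ⟨hv.2.1, hv.2.2.1⟩,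
    fun w hw v hv _ hGwv => huniq ⟨hw, hv.2.2.2⟩ hGwv⟩
end

section
/- Consider the linear map from ℝ × ℂ to ℂ² (viewed as real vector spaces of dimensions 3 and 4) given by the Jacobian D_λ V(Λ₀) of the translating-pair point vortex map at γ₁ = 1, γ₂ = −1, ζ₁ = i, ζ₂ = −i, c = 1/(4π), Ω = 0, with respect to λ = (γ₁, ζ₂). Explicitly, in real coordinates this map is (−1/(8π)) times the matrix with rows (0,0,1), (0,1,0), (2,0,1), (0,1,0). This map has rank 3, i.e. its range has real codimension 1 in ℝ⁴. -/
namespace Matrix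

variable {m n K : Type*} [Fintype m] [Fintype n] [Field K]

theorem rank_eq_card_width_of_mul_eq_one [DecidableEq n] {L : Matrix n m K} {A : Matrix m n K}
    (h : L * A = 1) : A.rank = Fintype.card n :=
  le_antisymm A.rank_le_card_width (by simpa [h, rank_one] using rank_mul_le_right L A)

theorem finrank_quotient_range_mulVecLin (A : Matrix m n K) :
    Module.finrank K ((m → K) ⧸ LinearMap.range A.mulVecLin) = Fintype.card m - A.rank := by
  rw [Submodule.finrank_quotient, Module.finrank_fintype_fun_eq_card, rank]

end Matrix

/-- The Jacobian `D_λ V(Λ₀)` of the translating-pair point vortex map at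
`γ₁ = 1, γ₂ = −1, ζ₁ = i, ζ₂ = −i, c = 1/(4π), Ω = 0` with respect to
`λ = (γ₁, ζ₂)`, written in real coordinates as `(−1/(8π))` times the matrix with
rows `(0,0,1), (0,1,0), (2,0,1), (0,1,0)`, has rank 3; equivalently its range has
real codimension 1 in `ℝ⁴`. -/
theorem translating_pair_jacobian_rank :
    let A : Matrix (Fin 4) (Fin 3) ℝ :=
      (-1 / (8 * Real.pi)) • !![0, 0, 1; 0, 1, 0; 2, 0, 1; 0, 1, 0]
    A.rank = 3 ∧
      Module.finrank ℝ ((Fin 4 → ℝ) ⧸ LinearMap.range A.mulVecLin) = 1 := by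
  intro A
  have hB : (!![0, 0, 1; 0, 1, 0; 2, 0, 1; 0, 1, 0] : Matrix (Fin 4) (Fin 3) ℝ).rank = 3 := by
    -- a left inverse: read `v₃` off row 1, `v₂` off row 2, and `v₁` off (row 3 − row 1) / 2
    have hinv : (!![-1/2, 0, 1/2, 0; 0, 1, 0, 0; 1, 0, 0, 0] : Matrix (Fin 3) (Fin 4) ℝ) *
        (!![0, 0, 1; 0, 1, 0; 2, 0, 1; 0, 1, 0] : Matrix (Fin 4) (Fin 3) ℝ) = 1 := by
      ext i j; fin_cases i <;> fin_cases j <;> norm_num [Matrix.mul_apply, Fin.sum_univ_succ]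
    simpa using Matrix.rank_eq_card_width_of_mul_eq_one hinv
  have hA : A.rank = 3 := by
    refine (Matrix.rank_smul_of_mem_nonZeroDivisors _ (mem_nonZeroDivisors_of_ne_zero ?_)).trans hB
    have := Real.pi_pos
    positivity
  refine ⟨hA, ?_⟩
  rw [Matrix.finrank_quotient_range_mulVecLin, hA, Fintype.card_fin]
end
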